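/- For an integer 1 ≤ r ≤ n and X ∈ S^n, one has X ∈ K^n_+ with rank(JXJ) ≤ r if and only if the leading (n-1)×(n-1) block X̃_{11} of HXH is positive semidefinite with rank(X̃_{11}) ≤ r, where H is the Householder matrix with u = (1,...,1,√n+1)^T. -/

import Mathlib

open Matrix

/-- The centering matrix `J = I - (1/n) 𝟙𝟙ᵀ` (of size `n+1`). -/
noncomputable def centerJ (n : ℕ) : Matrix (Fin (n + 1)) (Fin (n + 1)) ℝ :=
  1 - ((n + 1 : ℝ))⁻¹ • Matrix.of (fun _ _ => (1 : ℝ))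

/-- The vector `u = (1,…,1,√(n+1)+1)ᵀ`. -/
noncomputable def uvec (n : ℕ) : Fin (n + 1) → ℝ :=
  fun i => if i = Fin.last n then Real.sqrt (n + 1) + 1 else 1

/-- The Householder matrix `H = I - (2/(uᵀu)) u uᵀ`. -/
noncomputable def householderH (n : ℕ) : Matrix (Fin (n + 1)) (Fin (n + 1)) ℝ :=
  1 - (2 / (uvec n ⬝ᵥ uvec n)) • Matrix.vecMulVec (uvec n) (uvec n)

/-! The reflection `H` is a symmetric involution sending `𝟙` to `-√(n+1) eₙ`, so
`HJH = I - eₙeₙᵀ = EEᵀ` with `E = [Iₙ; 0]`. Hence `JXJ = (HE) X̃₁₁ (HE)ᵀ` and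
`X̃₁₁ = (HE)ᵀ (JXJ) (HE)`: each matrix is a congruence transform of the other, so they share
positive semidefiniteness and rank. Finally `JXJ ⪰ 0` says exactly that `xᵀXx ≥ 0` on `𝟙^⊥`,
because `J` is the orthogonal projection onto `𝟙^⊥`. -/

namespace Matrix

section Congruence

variable {m k R : Type*} [Fintype m] [Fintype k]

theorem posSemidef_iff_of_congruent [Ring R] [PartialOrder R] [StarRing R]
    [StarOrderedRing R] {A : Matrix m m R} {B : Matrix k k R} (F : Matrix m k R)
    (hA : A = F * B * Fᴴ) (hB : B = Fᴴ * A * F) : A.PosSemidef ↔ B.PosSemidef :=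
  ⟨fun h => hB ▸ h.conjTranspose_mul_mul_same F, fun h => hA ▸ h.mul_mul_conjTranspose_same F⟩

theorem rank_mul_mul_le {l n : Type*} [Fintype n] [CommRing R] [StrongRankCondition R]
    (F : Matrix l m R) (B : Matrix m k R) (G : Matrix k n R) : (F * B * G).rank ≤ B.rank :=
  (rank_mul_le_left _ _).trans (rank_mul_le_right _ _)

theorem rank_eq_of_congruent [CommRing R] [StarRing R] [StrongRankCondition R]
    {A : Matrix m m R} {B : Matrix k k R} (F : Matrix m k R)
    (hA : A = F * B * Fᴴ) (hB : B = Fᴴ * A * F) : A.rank = B.rank :=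
  le_antisymm (hA ▸ rank_mul_mul_le _ _ _) (hB ▸ rank_mul_mul_le _ _ _)

variable [Semiring R] [StarRing R] {H J : Matrix m m R} {E : Matrix m k R}

theorem mul_mul_eq_of_eq_conj_projection (hJ : J = H * (E * Eᴴ) * H) (hH : Hᴴ = H)
    (X : Matrix m m R) : J * X * J = H * E * (Eᴴ * (H * X * H) * E) * (H * E)ᴴ := by
  simp only [hJ, conjTranspose_mul, hH, Matrix.mul_assoc]

theorem compression_eq_of_eq_conj_projection [DecidableEq m] [DecidableEq k]
    (hJ : J = H * (E * Eᴴ) * H) (hH : Hᴴ = H) (hHH : H * H = 1) (hEE : Eᴴ * E = 1)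
    (X : Matrix m m R) :
    Eᴴ * (H * X * H) * E = (H * E)ᴴ * (J * X * J) * (H * E) := by
  have hHH' (M : Matrix k m R) : M * H * H = M := by
    rw [Matrix.mul_assoc, hHH, Matrix.mul_one]
  have hEE' (M : Matrix k k R) : M * Eᴴ * E = M := by
    rw [Matrix.mul_assoc, hEE, Matrix.mul_one]
  simp only [hJ, conjTranspose_mul, hH, ← Matrix.mul_assoc, hHH', hEE', hEE, Matrix.one_mul]

end Congruence

section ColumnSelection

variable {m k R : Type*} [Fintype m] [DecidableEq m] [Semiring R] {f : k → m}

theorem one_submatrix_mul_one_submatrix [DecidableEq k] (hf : Function.Injective f) :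
    (1 : Matrix m m R).submatrix f id * (1 : Matrix m m R).submatrix id f = 1 := by
  rw [← submatrix_mul _ _ _ _ _ Function.bijective_id, Matrix.one_mul, submatrix_one f hf]

theorem one_submatrix_mul_mul_one_submatrix (A : Matrix m m R) :
    (1 : Matrix m m R).submatrix f id * A * (1 : Matrix m m R).submatrix id f
      = A.submatrix f f := by
  nth_rw 1 [← submatrix_id_id A]
  rw [← submatrix_mul _ _ _ _ _ Function.bijective_id,
    ← submatrix_mul _ _ _ _ _ Function.bijective_id, Matrix.one_mul, Matrix.mul_one]

end ColumnSelection

end Matrix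

section Householder

variable {ι K : Type*} [Fintype ι] [DecidableEq ι] [Field K]

noncomputable def householder (u : ι → K) : Matrix ι ι K :=
  1 - (2 / (u ⬝ᵥ u)) • vecMulVec u u

theorem householder_transpose (u : ι → K) : (householder u)ᵀ = householder u := by
  simp [householder, transpose_vecMulVec]

theorem householder_mul_self {u : ι → K} (hu : u ⬝ᵥ u ≠ 0) :
    householder u * householder u = 1 := by
  have hc : (2 / (u ⬝ᵥ u)) * (2 / (u ⬝ᵥ u)) * (u ⬝ᵥ u) = 2 * (2 / (u ⬝ᵥ u)) := by
    field_simp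
  simp only [householder, sub_mul, mul_sub, Matrix.one_mul, Matrix.mul_one, smul_mul_smul,
    vecMulVec_mul_vecMulVec, vecMulVec_smul, smul_smul, hc]
  module

theorem householder_mulVec {u v : ι → K} (hu : u ⬝ᵥ u ≠ 0) (huv : u ⬝ᵥ u = 2 * (u ⬝ᵥ v)) :
    householder u *ᵥ v = v - u := by
  have hc : 2 / (u ⬝ᵥ u) * (u ⬝ᵥ v) = 1 := by
    rw [div_mul_eq_mul_div, div_eq_one_iff_eq hu, huv]
  simp [householder, sub_mulVec, smul_mulVec, vecMulVec_mulVec, smul_smul, hc]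

end Householder

section Centering

variable (n : ℕ)

theorem centerJ_eq : centerJ n = 1 - ((n : ℝ) + 1)⁻¹ • vecMulVec 1 1 := by
  rw [centerJ]
  congr
  ext
  simp

theorem centerJ_transpose : (centerJ n)ᵀ = centerJ n := by
  rw [centerJ_eq, transpose_sub, transpose_one, transpose_smul, transpose_vecMulVec]

theorem centerJ_mulVec (x : Fin (n + 1) → ℝ) :
    centerJ n *ᵥ x = x - (((n : ℝ) + 1)⁻¹ * (1 ⬝ᵥ x)) • 1 := by
  rw [centerJ_eq, sub_mulVec, one_mulVec, smul_mulVec, vecMulVec_mulVec, op_smul_eq_smul,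
    smul_smul]

theorem one_dotProduct_centerJ_mulVec (x : Fin (n + 1) → ℝ) : 1 ⬝ᵥ centerJ n *ᵥ x = 0 := by
  have : (1 : Fin (n + 1) → ℝ) ⬝ᵥ 1 = (n : ℝ) + 1 := by simp
  rw [centerJ_mulVec, dotProduct_sub, dotProduct_smul, this, smul_eq_mul]
  field_simp
  ring

theorem centerJ_mulVec_of_one_dotProduct_eq_zero {x : Fin (n + 1) → ℝ} (hx : 1 ⬝ᵥ x = 0) :
    centerJ n *ᵥ x = x := by
  simp [centerJ_mulVec, hx]

theorem posSemidef_centerJ_mul_mul_centerJ_iff {X : Matrix (Fin (n + 1)) (Fin (n + 1)) ℝ}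
    (hX : X.IsSymm) :
    (centerJ n * X * centerJ n).PosSemidef ↔ ∀ x, 1 ⬝ᵥ x = 0 → 0 ≤ x ⬝ᵥ X *ᵥ x := by
  have hquad (x : Fin (n + 1) → ℝ) :
      x ⬝ᵥ (centerJ n * X * centerJ n) *ᵥ x = (centerJ n *ᵥ x) ⬝ᵥ X *ᵥ (centerJ n *ᵥ x) := by
    have hJx : x ᵥ* centerJ n = centerJ n *ᵥ x := by
      simpa [centerJ_transpose] using vecMul_transpose (centerJ n) x
    rw [← mulVec_mulVec, ← mulVec_mulVec, dotProduct_mulVec x, hJx]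
  have hsymm : (centerJ n * X * centerJ n).IsHermitian := by
    rw [IsHermitian, conjTranspose_eq_transpose_of_trivial, transpose_mul, transpose_mul,
      centerJ_transpose, hX.eq, Matrix.mul_assoc]
  simp only [posSemidef_iff_dotProduct_mulVec, star_trivial, hquad, hsymm, true_and]
  refine ⟨fun h x hx => ?_, fun h x => h _ (one_dotProduct_centerJ_mulVec n x)⟩
  simpa [centerJ_mulVec_of_one_dotProduct_eq_zero n hx] using h x

end Centering

section Reflection

variable (n : ℕ)

theorem uvec_eq : uvec n = 1 + √((n : ℝ) + 1) • Pi.single (Fin.last n) 1 := by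
  ext i
  induction i using Fin.lastCases <;> simp [uvec, (Fin.castSucc_lt_last _).ne, add_comm]

theorem uvec_dotProduct_one : uvec n ⬝ᵥ 1 = (n : ℝ) + 1 + √((n : ℝ) + 1) := by
  simp [uvec_eq, add_dotProduct]

theorem uvec_dotProduct_self : uvec n ⬝ᵥ uvec n = 2 * (uvec n ⬝ᵥ 1) := by
  have hsq : √((n : ℝ) + 1) * √((n : ℝ) + 1) = (n : ℝ) + 1 := Real.mul_self_sqrt (by positivity)
  rw [uvec_dotProduct_one, uvec_eq]
  simp only [add_dotProduct, dotProduct_add, smul_dotProduct, dotProduct_smul, single_dotProduct,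
    dotProduct_single, one_dotProduct_one, Fintype.card_fin, Pi.add_apply, Pi.smul_apply,
    Pi.one_apply, Pi.single_eq_same, smul_eq_mul]
  push_cast
  linear_combination hsq

theorem uvec_dotProduct_self_pos : 0 < uvec n ⬝ᵥ uvec n := by
  rw [uvec_dotProduct_self, uvec_dotProduct_one]
  positivity

theorem one_sub_uvec : 1 - uvec n = -√((n : ℝ) + 1) • Pi.single (Fin.last n) 1 := by
  rw [uvec_eq, sub_add_cancel_left, neg_smul]

theorem householderH_transpose : (householderH n)ᵀ = householderH n :=
  householder_transpose (uvec n)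

theorem householderH_mul_self : householderH n * householderH n = 1 :=
  householder_mul_self (uvec_dotProduct_self_pos n).ne'

theorem householderH_mulVec_one :
    householderH n *ᵥ 1 = -√((n : ℝ) + 1) • Pi.single (Fin.last n) 1 :=
  (householder_mulVec (uvec_dotProduct_self_pos n).ne' (uvec_dotProduct_self n)).trans
    (one_sub_uvec n)

theorem householderH_mul_centerJ_mul_householderH :
    householderH n * centerJ n * householderH n
      = 1 - vecMulVec (Pi.single (Fin.last n) 1) (Pi.single (Fin.last n) 1) := by
  have hH1 : (1 : Fin (n + 1) → ℝ) ᵥ* householderH n = householderH n *ᵥ 1 := by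
    rw [← vecMul_transpose, householderH_transpose]
  have hsq : ((n : ℝ) + 1)⁻¹ * -√((n : ℝ) + 1) * -√((n : ℝ) + 1) = 1 := by
    rw [mul_assoc, neg_mul_neg, Real.mul_self_sqrt (by positivity),
      inv_mul_cancel₀ (by positivity)]
  rw [centerJ_eq, mul_sub, sub_mul, Matrix.mul_one, householderH_mul_self, mul_smul_comm,
    smul_mul_assoc, mul_vecMulVec, vecMulVec_mul, hH1, householderH_mulVec_one,
    smul_vecMulVec, vecMulVec_smul, smul_smul, smul_smul, hsq, one_smul]

end Reflection

section Inclusion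

variable (R : Type*) [Ring R] (n : ℕ)

def castSuccMatrix : Matrix (Fin (n + 1)) (Fin n) R :=
  (1 : Matrix (Fin (n + 1)) (Fin (n + 1)) R).submatrix id Fin.castSucc

theorem castSuccMatrix_transpose :
    (castSuccMatrix R n)ᵀ
      = (1 : Matrix (Fin (n + 1)) (Fin (n + 1)) R).submatrix Fin.castSucc id := by
  rw [castSuccMatrix, transpose_submatrix, transpose_one]

theorem castSuccMatrix_transpose_mul_self : (castSuccMatrix R n)ᵀ * castSuccMatrix R n = 1 := by
  rw [castSuccMatrix_transpose, castSuccMatrix,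
    one_submatrix_mul_one_submatrix (Fin.castSucc_injective n)]

theorem castSuccMatrix_transpose_mul_mul (A : Matrix (Fin (n + 1)) (Fin (n + 1)) R) :
    (castSuccMatrix R n)ᵀ * A * castSuccMatrix R n = A.submatrix Fin.castSucc Fin.castSucc := by
  rw [castSuccMatrix_transpose, castSuccMatrix, one_submatrix_mul_mul_one_submatrix]

theorem castSuccMatrix_mul_transpose :
    castSuccMatrix R n * (castSuccMatrix R n)ᵀ
      = 1 - vecMulVec (Pi.single (Fin.last n) 1) (Pi.single (Fin.last n) 1) := by
  rw [castSuccMatrix_transpose, castSuccMatrix]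
  ext i j
  -- `EEᵀ` is the expansion of `1 * 1` with its last summand removed
  have h := congrFun₂ (Matrix.mul_one (1 : Matrix (Fin (n + 1)) (Fin (n + 1)) R)) i j
  rw [mul_apply, Fin.sum_univ_castSucc] at h
  simp only [one_apply, mul_ite, mul_one, mul_zero, Matrix.sub_apply, vecMulVec_apply,
    Pi.single_apply, mul_apply, submatrix_apply, id_eq] at h ⊢
  rw [← h]
  simp only [@eq_comm _ j (Fin.last n), add_sub_cancel_right]

end Inclusion

theorem centerJ_eq_householderH_conj (n : ℕ) :
    centerJ n
      = householderH n * (castSuccMatrix ℝ n * (castSuccMatrix ℝ n)ᵀ) * householderH n := by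
  rw [castSuccMatrix_mul_transpose, ← householderH_mul_centerJ_mul_householderH,
    ← Matrix.mul_assoc, ← Matrix.mul_assoc, householderH_mul_self, Matrix.one_mul,
    Matrix.mul_assoc, householderH_mul_self, Matrix.mul_one]

theorem almost_psd_rank_iff_general (n r : ℕ)
    (X : Matrix (Fin (n + 1)) (Fin (n + 1)) ℝ) (hX : X.IsSymm) :
    ((∀ x : Fin (n + 1) → ℝ,
        (fun _ => (1 : ℝ)) ⬝ᵥ x = 0 → 0 ≤ x ⬝ᵥ X.mulVec x) ∧
      (centerJ n * X * centerJ n).rank ≤ r) ↔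
    (((householderH n * X * householderH n).submatrix
        (Fin.castSucc : Fin n → Fin (n + 1))
        (Fin.castSucc : Fin n → Fin (n + 1))).PosSemidef ∧
      ((householderH n * X * householderH n).submatrix
        (Fin.castSucc : Fin n → Fin (n + 1))
        (Fin.castSucc : Fin n → Fin (n + 1))).rank ≤ r) := by
  have hH : (householderH n)ᴴ = householderH n := by
    rw [conjTranspose_eq_transpose_of_trivial, householderH_transpose]
  have hJ := conjTranspose_eq_transpose_of_trivial (castSuccMatrix ℝ n) ▸
    centerJ_eq_householderH_conj n
  have hEE := conjTranspose_eq_transpose_of_trivial (castSuccMatrix ℝ n) ▸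
    castSuccMatrix_transpose_mul_self ℝ n
  have hA := mul_mul_eq_of_eq_conj_projection hJ hH X
  have hB := compression_eq_of_eq_conj_projection hJ hH (householderH_mul_self n) hEE X
  rw [conjTranspose_eq_transpose_of_trivial, castSuccMatrix_transpose_mul_mul] at hA hB
  rw [← posSemidef_iff_of_congruent _ hA hB, ← rank_eq_of_congruent _ hA hB]
  exact and_congr_left' (posSemidef_centerJ_mul_mul_centerJ_iff n hX).symm

/-- `X ∈ K^n_+` and `rank(JXJ) ≤ r` iff the leading block `X̃₁₁` of `HXH`
is positive semidefinite with rank at most `r`. -/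
theorem almost_psd_rank_iff (n r : ℕ) (hr : 1 ≤ r) (hrn : r ≤ n + 1)
    (X : Matrix (Fin (n + 1)) (Fin (n + 1)) ℝ) (hX : X.IsSymm) :
    ((∀ x : Fin (n + 1) → ℝ,
        (fun _ => (1 : ℝ)) ⬝ᵥ x = 0 → 0 ≤ x ⬝ᵥ X.mulVec x) ∧
      (centerJ n * X * centerJ n).rank ≤ r) ↔
    (((householderH n * X * householderH n).submatrix
        (Fin.castSucc : Fin n → Fin (n + 1))
        (Fin.castSucc : Fin n → Fin (n + 1))).PosSemidef ∧
      ((householderH n * X * householderH n).submatrix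
        (Fin.castSucc : Fin n → Fin (n + 1))
        (Fin.castSucc : Fin n → Fin (n + 1))).rank ≤ r) :=
  almost_psd_rank_iff_general n r X hX
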